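/- Every nonzero homogeneous (with respect to total degree) polynomial lying in the intersection J_{P3} ∩ J_{K13} has total degree at least 4. Equivalently, the ideal J_{P3} ∩ J_{K13} is generated in degrees at least four. -/
import Mathlib


section Aux

open MvPolynomial Finsupp

lemma deg_one_classify {σ : Type*} (m : σ →₀ ℕ) (h : m.degree = 1) :
    ∃ i, m = Finsupp.single i 1 := by
  classical
  have hne : m ≠ 0 := by
    intro h0
    rw [h0, map_zero] at h
    omega
  obtain ⟨i, hi⟩ := Finsupp.ne_iff.mp hne
  simp only [Finsupp.coe_zero, Pi.zero_apply] at hi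
  have hile := Finsupp.le_degree i m
  have hmi : m i = 1 := by omega
  refine ⟨i, ?_⟩
  ext j
  rcases eq_or_ne j i with rfl | hj
  · simp [hmi]
  · rw [Finsupp.single_apply, if_neg (Ne.symm hj)]
    by_contra hb
    have hsubset : ({i, j} : Finset σ) ⊆ m.support := by
      intro t ht
      rw [Finset.mem_insert, Finset.mem_singleton] at ht
      rcases ht with rfl | rfl <;> rw [Finsupp.mem_support_iff] <;> assumption
    have hsum := Finset.sum_le_sum_of_subset (f := fun t => m t) hsubset
    rw [Finset.sum_pair (Ne.symm hj)] at hsum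
    have hdeg : (∑ t ∈ m.support, m t) = m.degree := rfl
    rw [hdeg, h] at hsum
    omega

lemma eq_zero_of_coeff {σ R : Type*} [CommRing R] {a : MvPolynomial σ R} {n : ℕ}
    (ha : a.IsHomogeneous n) (h : ∀ m : σ →₀ ℕ, m.degree = n → coeff m a = 0) : a = 0 := by
  ext m
  rw [coeff_zero]
  by_cases hm : m.degree = n
  · exact h m hm
  · exact ha.coeff_eq_zero hm

lemma hc_mul {σ R : Type*} [CommRing R] {p : MvPolynomial σ R} {n : ℕ}
    (hp : p.IsHomogeneous n) (a : MvPolynomial σ R) (k : ℕ) :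
    homogeneousComponent k (a * p) =
      if n ≤ k then homogeneousComponent (k - n) a * p else 0 := by
  classical
  have hT : a * p = ∑ i ∈ Finset.range (a.totalDegree + 1), homogeneousComponent i a * p := by
    rw [← Finset.sum_mul, sum_homogeneousComponent]
  rw [hT, map_sum]
  have hterm : ∀ i, homogeneousComponent k (homogeneousComponent i a * p)
      = if k = i + n then homogeneousComponent i a * p else 0 := fun i =>
    homogeneousComponent_of_mem ((mem_homogeneousSubmodule _ _).mpr
      ((homogeneousComponent_isHomogeneous i a).mul hp))
  by_cases hnk : n ≤ k
  · rw [if_pos hnk]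
    have hiff : ∀ i : ℕ, (k = i + n) ↔ (i = k - n) := fun i => by omega
    calc (∑ i ∈ Finset.range (a.totalDegree + 1),
            homogeneousComponent k (homogeneousComponent i a * p))
        = ∑ i ∈ Finset.range (a.totalDegree + 1),
            if i = k - n then homogeneousComponent i a * p else 0 := by
          refine Finset.sum_congr rfl fun i _ => ?_
          rw [hterm i]
          simp only [hiff i]
      _ = if k - n ∈ Finset.range (a.totalDegree + 1)
            then homogeneousComponent (k - n) a * p else 0 := Finset.sum_ite_eq' _ _ _
      _ = homogeneousComponent (k - n) a * p := by
          by_cases hmem : k - n ∈ Finset.range (a.totalDegree + 1)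
          · rw [if_pos hmem]
          · rw [if_neg hmem, homogeneousComponent_eq_zero, zero_mul]
            simp only [Finset.mem_range] at hmem
            omega
  · rw [if_neg hnk]
    refine Finset.sum_eq_zero fun i _ => ?_
    rw [hterm i, if_neg (by omega)]

lemma span_pair_cases {σ R : Type*} [CommRing R] {p q f : MvPolynomial σ R}
    (hp : p.IsHomogeneous 2) (hq : q.IsHomogeneous 2) {d : ℕ}
    (hfd : f.IsHomogeneous d) (hmem : f ∈ Ideal.span {p, q}) :
    (d < 2 → f = 0) ∧ (2 ≤ d → ∃ a b : MvPolynomial σ R,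
      a.IsHomogeneous (d - 2) ∧ b.IsHomogeneous (d - 2) ∧ f = a * p + b * q) := by
  obtain ⟨a, b, hab⟩ := Ideal.mem_span_pair.mp hmem
  have hfc : homogeneousComponent d f = f := by
    rw [homogeneousComponent_of_mem ((mem_homogeneousSubmodule _ _).mpr hfd), if_pos rfl]
  constructor
  · intro hd
    calc f = homogeneousComponent d f := hfc.symm
    _ = homogeneousComponent d (a * p) + homogeneousComponent d (b * q) := by
        rw [← hab, map_add]
    _ = 0 := by rw [hc_mul hp, hc_mul hq, if_neg (by omega), if_neg (by omega), add_zero]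
  · intro hd
    refine ⟨homogeneousComponent (d - 2) a, homogeneousComponent (d - 2) b,
      homogeneousComponent_isHomogeneous _ _, homogeneousComponent_isHomogeneous _ _, ?_⟩
    calc f = homogeneousComponent d f := hfc.symm
    _ = homogeneousComponent d (a * p) + homogeneousComponent d (b * q) := by
        rw [← hab, map_add]
    _ = _ := by rw [hc_mul hp, hc_mul hq, if_pos hd, if_pos hd]

lemma coeff_mul_bino {σ R : Type*} [CommRing R] (c : MvPolynomial σ R) (u v u' v' : σ)
    (m : σ →₀ ℕ) :
    coeff m (c * (X u * X v - X u' * X v')) =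
      (if Finsupp.single u 1 + Finsupp.single v 1 ≤ m
        then coeff (m - (Finsupp.single u 1 + Finsupp.single v 1)) c else 0)
    - (if Finsupp.single u' 1 + Finsupp.single v' 1 ≤ m
        then coeff (m - (Finsupp.single u' 1 + Finsupp.single v' 1)) c else 0) := by
  have hXX : ∀ w w' : σ, (X w * X w' : MvPolynomial σ R)
      = monomial (Finsupp.single w 1 + Finsupp.single w' 1) 1 := by
    intro w w'
    rw [show (X w : MvPolynomial σ R) = monomial (Finsupp.single w 1) 1 from rfl,
        show (X w' : MvPolynomial σ R) = monomial (Finsupp.single w' 1) 1 from rfl,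
        monomial_mul, mul_one]
  rw [mul_sub, coeff_sub, hXX, hXX, coeff_mul_monomial', coeff_mul_monomial']
  split_ifs <;> simp


set_option maxHeartbeats 4000000


/- Variables: the polynomial ring K[x1,x2,x3,x4,y1,y2,y3,y4] is modelled as
`MvPolynomial (Fin 4 ⊕ Fin 4) K`, where `x (k-1) = X (Sum.inl (k-1))` stands for x_k and
`y (k-1) = X (Sum.inr (k-1))` stands for y_k. -/

open MvPolynomial

noncomputable section

variable (K : Type*) [Field K]

/-- x_(i+1) -/
noncomputable def x (i : Fin 4) : MvPolynomial (Fin 4 ⊕ Fin 4) K := X (Sum.inl i)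

/-- y_(i+1) -/
noncomputable def y (i : Fin 4) : MvPolynomial (Fin 4 ⊕ Fin 4) K := X (Sum.inr i)

/-- The parity binomial edge ideal of the path 1–4–3. -/
noncomputable def JP3 : Ideal (MvPolynomial (Fin 4 ⊕ Fin 4) K) :=
  Ideal.span {x K 0 * x K 3 - y K 0 * y K 3,
              x K 2 * x K 3 - y K 2 * y K 3}

/-- The parity binomial edge ideal of the star with center 2 and leaves 1,3,4. -/
noncomputable def JK13 : Ideal (MvPolynomial (Fin 4 ⊕ Fin 4) K) :=
  Ideal.span {x K 0 * x K 1 - y K 0 * y K 1,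
              x K 1 * x K 2 - y K 1 * y K 2,
              x K 1 * x K 3 - y K 1 * y K 3}

/-- Every nonzero homogeneous polynomial in J_{P3} ∩ J_{K13} has total degree at least 4. -/
theorem JP3_inter_JK13_generated_in_degree_ge_four
    (f : MvPolynomial (Fin 4 ⊕ Fin 4) K) (d : ℕ)
    (hf : f ∈ JP3 K ⊓ JK13 K) (hhom : f.IsHomogeneous d) (hne : f ≠ 0) :
    4 ≤ d := by
  classical
  obtain ⟨hfP, hfK⟩ := Submodule.mem_inf.mp hf
  have hfP' : f ∈ Ideal.span {(X (Sum.inl 0) * X (Sum.inl 3) - X (Sum.inr 0) * X (Sum.inr 3) :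
      MvPolynomial (Fin 4 ⊕ Fin 4) K),
      X (Sum.inl 2) * X (Sum.inl 3) - X (Sum.inr 2) * X (Sum.inr 3)} := by
    simpa [JP3, x, y] using hfP
  have hfK' : f ∈ Ideal.span {(X (Sum.inl 0) * X (Sum.inl 1) - X (Sum.inr 0) * X (Sum.inr 1) :
      MvPolynomial (Fin 4 ⊕ Fin 4) K),
      X (Sum.inl 1) * X (Sum.inl 2) - X (Sum.inr 1) * X (Sum.inr 2),
      X (Sum.inl 1) * X (Sum.inl 3) - X (Sum.inr 1) * X (Sum.inr 3)} := by
    simpa [JK13, x, y] using hfK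
  have hX2 : ∀ u v : Fin 4 ⊕ Fin 4,
      (X u * X v : MvPolynomial (Fin 4 ⊕ Fin 4) K).IsHomogeneous 2 := fun u v => by
    simpa using (isHomogeneous_X K u).mul (isHomogeneous_X K v)
  have hg1 := (hX2 (Sum.inl 0) (Sum.inl 3)).sub (hX2 (Sum.inr 0) (Sum.inr 3))
  have hg2 := (hX2 (Sum.inl 2) (Sum.inl 3)).sub (hX2 (Sum.inr 2) (Sum.inr 3))
  by_contra hcon
  push_neg at hcon
  -- decomposition from the JK13 side, with arbitrary coefficients
  obtain ⟨c, z, hz, hf1⟩ := Ideal.mem_span_insert.mp hfK'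
  obtain ⟨d2, e2, hde⟩ := Ideal.mem_span_pair.mp hz
  have hcde : f = c * (X (Sum.inl 0) * X (Sum.inl 1) - X (Sum.inr 0) * X (Sum.inr 1))
      + (d2 * (X (Sum.inl 1) * X (Sum.inl 2) - X (Sum.inr 1) * X (Sum.inr 2))
      + e2 * (X (Sum.inl 1) * X (Sum.inl 3) - X (Sum.inr 1) * X (Sum.inr 3))) := by
    rw [hf1, hde]
  interval_cases d
  · exact hne ((span_pair_cases hg1 hg2 hhom hfP').1 (by omega))
  · exact hne ((span_pair_cases hg1 hg2 hhom hfP').1 (by omega))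
  · -- degree 2
    obtain ⟨a, b, ha, hb, hab⟩ := (span_pair_cases hg1 hg2 hhom hfP').2 (by omega)
    have key : ∀ m : (Fin 4 ⊕ Fin 4) →₀ ℕ,
        coeff m (a * (X (Sum.inl 0) * X (Sum.inl 3) - X (Sum.inr 0) * X (Sum.inr 3)))
        + coeff m (b * (X (Sum.inl 2) * X (Sum.inl 3) - X (Sum.inr 2) * X (Sum.inr 3)))
        = coeff m (c * (X (Sum.inl 0) * X (Sum.inl 1) - X (Sum.inr 0) * X (Sum.inr 1)))
        + (coeff m (d2 * (X (Sum.inl 1) * X (Sum.inl 2) - X (Sum.inr 1) * X (Sum.inr 2)))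
        + coeff m (e2 * (X (Sum.inl 1) * X (Sum.inl 3) - X (Sum.inr 1) * X (Sum.inr 3)))) :=
      fun m => by rw [← coeff_add, ← coeff_add, ← coeff_add, ← hab, ← hcde]
    have hA : coeff 0 a = 0 := by
      have h := key (Finsupp.single (Sum.inl 0) 1 + Finsupp.single (Sum.inl 3) 1)
      simp only [coeff_mul_bino] at h
      simpa +decide [Finsupp.le_def, Sum.forall, Fin.forall_fin_succ, Finsupp.single_apply,
        Finsupp.add_apply] using h
    have hB : coeff 0 b = 0 := by
      have h := key (Finsupp.single (Sum.inl 2) 1 + Finsupp.single (Sum.inl 3) 1)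
      simp only [coeff_mul_bino] at h
      simpa +decide [Finsupp.le_def, Sum.forall, Fin.forall_fin_succ, Finsupp.single_apply,
        Finsupp.add_apply] using h
    have ha0 : a = 0 := eq_zero_of_coeff ha (fun m hm => by
      have : m = 0 := (Finsupp.degree_eq_zero_iff m).mp (by omega)
      rw [this]; exact hA)
    have hb0 : b = 0 := eq_zero_of_coeff hb (fun m hm => by
      have : m = 0 := (Finsupp.degree_eq_zero_iff m).mp (by omega)
      rw [this]; exact hB)
    exact hne (by rw [hab, ha0, hb0]; ring)
  · -- degree 3
    obtain ⟨a, b, ha, hb, hab⟩ := (span_pair_cases hg1 hg2 hhom hfP').2 (by omega)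
    have key : ∀ m : (Fin 4 ⊕ Fin 4) →₀ ℕ,
        coeff m (a * (X (Sum.inl 0) * X (Sum.inl 3) - X (Sum.inr 0) * X (Sum.inr 3)))
        + coeff m (b * (X (Sum.inl 2) * X (Sum.inl 3) - X (Sum.inr 2) * X (Sum.inr 3)))
        = coeff m (c * (X (Sum.inl 0) * X (Sum.inl 1) - X (Sum.inr 0) * X (Sum.inr 1)))
        + (coeff m (d2 * (X (Sum.inl 1) * X (Sum.inl 2) - X (Sum.inr 1) * X (Sum.inr 2)))
        + coeff m (e2 * (X (Sum.inl 1) * X (Sum.inl 3) - X (Sum.inr 1) * X (Sum.inr 3)))) :=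
      fun m => by rw [← coeff_add, ← coeff_add, ← coeff_add, ← hab, ← hcde]
    have hA : ∀ v : Fin 4 ⊕ Fin 4, coeff (Finsupp.single v 1) a = 0 := by
      have P1 := fun (v : Fin 4 ⊕ Fin 4) =>
        key ((Finsupp.single (Sum.inl 0) 1 + Finsupp.single (Sum.inl 3) 1) + Finsupp.single v 1)
      have Q1 := fun (v : Fin 4 ⊕ Fin 4) =>
        key ((Finsupp.single (Sum.inr 0) 1 + Finsupp.single (Sum.inr 3) 1) + Finsupp.single v 1)
      intro v
      rcases v with i | i <;> fin_cases i
      · have h := P1 (Sum.inl 0)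
        simp only [coeff_mul_bino] at h
        simpa +decide [Finsupp.le_def, Sum.forall, Fin.forall_fin_succ, Finsupp.single_apply,
          Finsupp.add_apply, add_tsub_cancel_left] using h
      · have h := Q1 (Sum.inl 1)
        simp only [coeff_mul_bino] at h
        simpa +decide [Finsupp.le_def, Sum.forall, Fin.forall_fin_succ, Finsupp.single_apply,
          Finsupp.add_apply, add_tsub_cancel_left] using h
      · have h := Q1 (Sum.inl 2)
        simp only [coeff_mul_bino] at h
        simpa +decide [Finsupp.le_def, Sum.forall, Fin.forall_fin_succ, Finsupp.single_apply,
          Finsupp.add_apply, add_tsub_cancel_left] using h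
      · have h := P1 (Sum.inl 3)
        simp only [coeff_mul_bino] at h
        simpa +decide [Finsupp.le_def, Sum.forall, Fin.forall_fin_succ, Finsupp.single_apply,
          Finsupp.add_apply, add_tsub_cancel_left] using h
      · have h := P1 (Sum.inr 0)
        simp only [coeff_mul_bino] at h
        simpa +decide [Finsupp.le_def, Sum.forall, Fin.forall_fin_succ, Finsupp.single_apply,
          Finsupp.add_apply, add_tsub_cancel_left] using h
      · have h := P1 (Sum.inr 1)
        simp only [coeff_mul_bino] at h
        simpa +decide [Finsupp.le_def, Sum.forall, Fin.forall_fin_succ, Finsupp.single_apply,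
          Finsupp.add_apply, add_tsub_cancel_left] using h
      · have h := P1 (Sum.inr 2)
        simp only [coeff_mul_bino] at h
        simpa +decide [Finsupp.le_def, Sum.forall, Fin.forall_fin_succ, Finsupp.single_apply,
          Finsupp.add_apply, add_tsub_cancel_left] using h
      · have h := P1 (Sum.inr 3)
        simp only [coeff_mul_bino] at h
        simpa +decide [Finsupp.le_def, Sum.forall, Fin.forall_fin_succ, Finsupp.single_apply,
          Finsupp.add_apply, add_tsub_cancel_left] using h
    have hB : ∀ v : Fin 4 ⊕ Fin 4, coeff (Finsupp.single v 1) b = 0 := by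
      have P2 := fun (v : Fin 4 ⊕ Fin 4) =>
        key ((Finsupp.single (Sum.inl 2) 1 + Finsupp.single (Sum.inl 3) 1) + Finsupp.single v 1)
      have Q2 := fun (v : Fin 4 ⊕ Fin 4) =>
        key ((Finsupp.single (Sum.inr 2) 1 + Finsupp.single (Sum.inr 3) 1) + Finsupp.single v 1)
      intro v
      rcases v with i | i <;> fin_cases i
      · have h := Q2 (Sum.inl 0)
        simp only [coeff_mul_bino] at h
        simpa +decide [Finsupp.le_def, Sum.forall, Fin.forall_fin_succ, Finsupp.single_apply,
          Finsupp.add_apply, add_tsub_cancel_left] using h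
      · have h := Q2 (Sum.inl 1)
        simp only [coeff_mul_bino] at h
        simpa +decide [Finsupp.le_def, Sum.forall, Fin.forall_fin_succ, Finsupp.single_apply,
          Finsupp.add_apply, add_tsub_cancel_left] using h
      · have h := P2 (Sum.inl 2)
        simp only [coeff_mul_bino] at h
        simpa +decide [Finsupp.le_def, Sum.forall, Fin.forall_fin_succ, Finsupp.single_apply,
          Finsupp.add_apply, add_tsub_cancel_left] using h
      · have h := P2 (Sum.inl 3)
        simp only [coeff_mul_bino] at h
        simpa +decide [Finsupp.le_def, Sum.forall, Fin.forall_fin_succ, Finsupp.single_apply,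
          Finsupp.add_apply, add_tsub_cancel_left] using h
      · have h := P2 (Sum.inr 0)
        simp only [coeff_mul_bino] at h
        simpa +decide [Finsupp.le_def, Sum.forall, Fin.forall_fin_succ, Finsupp.single_apply,
          Finsupp.add_apply, add_tsub_cancel_left] using h
      · have h := P2 (Sum.inr 1)
        simp only [coeff_mul_bino] at h
        simpa +decide [Finsupp.le_def, Sum.forall, Fin.forall_fin_succ, Finsupp.single_apply,
          Finsupp.add_apply, add_tsub_cancel_left] using h
      · have h := P2 (Sum.inr 2)
        simp only [coeff_mul_bino] at h
        simpa +decide [Finsupp.le_def, Sum.forall, Fin.forall_fin_succ, Finsupp.single_apply,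
          Finsupp.add_apply, add_tsub_cancel_left] using h
      · have h := P2 (Sum.inr 3)
        simp only [coeff_mul_bino] at h
        simpa +decide [Finsupp.le_def, Sum.forall, Fin.forall_fin_succ, Finsupp.single_apply,
          Finsupp.add_apply, add_tsub_cancel_left] using h
    have ha0 : a = 0 := eq_zero_of_coeff ha (fun m hm => by
      obtain ⟨i, rfl⟩ := deg_one_classify m (by omega)
      exact hA i)
    have hb0 : b = 0 := eq_zero_of_coeff hb (fun m hm => by
      obtain ⟨i, rfl⟩ := deg_one_classify m (by omega)
      exact hB i)
    exact hne (by rw [hab, ha0, hb0]; ring)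


end
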